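/- arXiv:2106.00154 — 7 statements merged into one kernel-verified Lean document; each statement's English description precedes it below -/
import Mathlib

section
/- Let κ be a monotonic classifier, v an instance, and X ⊆ F a set of features. Define x⊥(X) ∈ 𝔽 by x⊥(X)_i = v_i for i ∈ X and x⊥(X)_i = λ(i) (the minimum of D i) otherwise, and x⊤(X) ∈ 𝔽 by x⊤(X)_i = v_i for i ∈ X and x⊤(X)_i = μ(i) (the maximum of D i) otherwise. Then X is a weak AXp of κ at v if and only if κ(x⊥(X)) = κ(x⊤(X)). -/
/-- `X` is a weak AXp of classifier `κ` at instance `v`. -/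
def WeakAXp {N : ℕ} {D : Fin N → Type*} {K : Type*}
    (κ : (∀ i, D i) → K) (v : ∀ i, D i) (X : Finset (Fin N)) : Prop :=
  ∀ x : ∀ i, D i, (∀ i ∈ X, x i = v i) → κ x = κ v

/-- For a monotonic classifier `κ` and instance `v`, a set `X` of
features is a weak AXp iff the classifier gives the same prediction on the point
fixing features of `X` to their values in `v` and all remaining features to domain
minima, and on the analogous point with remaining features at domain maxima. -/
theorem weakAXp_iff_extremes_eq
    {N : ℕ} {D : Fin N → Type*} [∀ i, LinearOrder (D i)] [∀ i, BoundedOrder (D i)]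
    [∀ i, Nonempty (D i)]
    {K : Type*} [PartialOrder K]
    (κ : (∀ i, D i) → K) (hκ : Monotone κ)
    (v : ∀ i, D i) (X : Finset (Fin N)) :
    WeakAXp κ v X ↔
      κ (fun i => if i ∈ X then v i else ⊥) = κ (fun i => if i ∈ X then v i else ⊤) := by
  constructor
  · intro h
    rw [h _ (fun i hi => if_pos hi), h _ (fun i hi => if_pos hi)]
  · intro h x hx
    have key : ∀ y : ∀ i, D i, (∀ i ∈ X, y i = v i) →
        κ y = κ (fun i => if i ∈ X then v i else ⊥) := by
      intro y hy
      have h1 : κ (fun i => if i ∈ X then v i else ⊥) ≤ κ y := by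
        apply hκ; intro i
        by_cases hi : i ∈ X
        · simp [hi, hy i hi]
        · simp [hi]
      have h2 : κ y ≤ κ (fun i => if i ∈ X then v i else ⊤) := by
        apply hκ; intro i
        by_cases hi : i ∈ X
        · simp [hi, hy i hi]
        · simp [hi]
      exact le_antisymm (h ▸ h2) h1
    rw [key x hx, key v (fun i _ => rfl)]
end

section
/- Let κ be a monotonic classifier, v an instance, and Y ⊆ F a set of features. Define x⊥(F\Y) ∈ 𝔽 by taking coordinate v_i for i ∈ F \ Y and the domain minimum λ(i) for i ∈ Y, and x⊤(F\Y) ∈ 𝔽 by taking v_i for i ∈ F \ Y and the domain maximum μ(i) for i ∈ Y. Then Y is a weak CXp of κ at v if and only if κ(x⊥(F\Y)) ≠ κ(x⊤(F\Y)). -/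
/-- `Y` is a weak CXp of classifier `κ` at instance `v`. -/
def WeakCXp {N : ℕ} {D : Fin N → Type*} {K : Type*}
    (κ : (∀ i, D i) → K) (v : ∀ i, D i) (Y : Finset (Fin N)) : Prop :=
  ∃ x : ∀ i, D i, (∀ j ∉ Y, x j = v j) ∧ κ x ≠ κ v

/-- For a monotonic classifier `κ` and instance `v`, a set `Y` of
features is a weak CXp iff the classifier gives different predictions on the point
fixing the features outside `Y` to their values in `v` and the features of `Y` to
domain minima, and on the analogous point with features of `Y` at domain maxima. -/
theorem weakCXp_iff_extremes_ne
    {N : ℕ} {D : Fin N → Type*} [∀ i, LinearOrder (D i)] [∀ i, BoundedOrder (D i)]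
    [∀ i, Nonempty (D i)]
    {K : Type*} [PartialOrder K]
    (κ : (∀ i, D i) → K) (hκ : Monotone κ)
    (v : ∀ i, D i) (Y : Finset (Fin N)) :
    WeakCXp κ v Y ↔
      κ (fun i => if i ∈ Y then ⊥ else v i) ≠ κ (fun i => if i ∈ Y then ⊤ else v i) := by

  set xlo : ∀ i, D i := fun i => if i ∈ Y then ⊥ else v i with hxlo
  set xhi : ∀ i, D i := fun i => if i ∈ Y then ⊤ else v i with hxhi
  have hbound : ∀ x : ∀ i, D i, (∀ j ∉ Y, x j = v j) → xlo ≤ x ∧ x ≤ xhi := by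
    intro x hx
    constructor <;> intro i <;> by_cases h : i ∈ Y <;>
      simp [hxlo, hxhi, h] <;> first | exact (hx i h).le | exact (hx i h).ge
  constructor
  · rintro ⟨x, hx, hne⟩ heq
    obtain ⟨h1, h2⟩ := hbound x hx
    obtain ⟨h3, h4⟩ := hbound v (fun j _ => rfl)
    exact hne (le_antisymm (le_trans (hκ h2) (heq ▸ hκ h3))
      (le_trans (hκ h4) (heq ▸ hκ h1)))
  · intro hne
    by_cases h : κ xlo = κ v
    · exact ⟨xhi, fun j hj => by simp [hxhi, hj], fun he => hne (h.trans he.symm)⟩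
    · exact ⟨xlo, fun j hj => by simp [hxlo, hj], h⟩
end

section
/- A locally minimal weak AXp is an AXp: if P ⊆ F is a weak AXp of κ at v and for every i ∈ P the set P \ {i} is not a weak AXp of κ at v, then P is subset-minimal among weak AXp's, i.e., P is an AXp of κ at v. (This is the correctness of the deletion-based algorithm findAXp: the set of features it keeps fixed is an AXp.) -/
/-- An AXp is a subset-minimal weak AXp. -/
def AXp {N : ℕ} {D : Fin N → Type*} {K : Type*}
    (κ : (∀ i, D i) → K) (v : ∀ i, D i) (X : Finset (Fin N)) : Prop :=
  WeakAXp κ v X ∧ ∀ X' ⊂ X, ¬ WeakAXp κ v X'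

/-- A locally minimal weak AXp is an AXp: if `P` is a weak AXp and
removing any single feature from `P` destroys the weak AXp property, then `P` is a
subset-minimal weak AXp. -/
theorem locally_minimal_weakAXp_is_AXp
    {N : ℕ} {D : Fin N → Type*} [∀ i, LinearOrder (D i)] [∀ i, BoundedOrder (D i)]
    [∀ i, Nonempty (D i)]
    {K : Type*}
    (κ : (∀ i, D i) → K) (v : ∀ i, D i) (P : Finset (Fin N))
    (hP : WeakAXp κ v P)
    (hloc : ∀ i ∈ P, ¬ WeakAXp κ v (P.erase i)) :
    AXp κ v P := by
  refine ⟨hP, fun X' hX' hweak => ?_⟩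
  obtain ⟨i, hiP, hiX'⟩ := Finset.exists_of_ssubset hX'
  exact hloc i hiP fun x hx => hweak x fun j hj =>
    hx j (Finset.mem_erase.mpr ⟨fun h => hiX' (h ▸ hj), hX'.subset hj⟩)
end

section
/- A locally minimal weak CXp is a CXp: if P ⊆ F is a weak CXp of κ at v and for every i ∈ P the set P \ {i} is not a weak CXp of κ at v, then P is subset-minimal among weak CXp's, i.e., P is a CXp of κ at v. (This is the correctness of the deletion-based algorithm findCXp: the set of features it leaves free is a CXp.) -/
/-- A CXp is a subset-minimal weak CXp. -/
def CXp {N : ℕ} {D : Fin N → Type*} {K : Type*}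
    (κ : (∀ i, D i) → K) (v : ∀ i, D i) (Y : Finset (Fin N)) : Prop :=
  WeakCXp κ v Y ∧ ∀ Y' ⊂ Y, ¬ WeakCXp κ v Y'

/-- A locally minimal weak CXp is a CXp: if `P` is a weak CXp and
removing any single feature from `P` destroys the weak CXp property, then `P` is a
subset-minimal weak CXp. -/
theorem locally_minimal_weakCXp_is_CXp
    {N : ℕ} {D : Fin N → Type*} [∀ i, LinearOrder (D i)] [∀ i, BoundedOrder (D i)]
    [∀ i, Nonempty (D i)]
    {K : Type*}
    (κ : (∀ i, D i) → K) (v : ∀ i, D i) (P : Finset (Fin N))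
    (hP : WeakCXp κ v P)
    (hloc : ∀ i ∈ P, ¬ WeakCXp κ v (P.erase i)) :
    CXp κ v P := by
  refine ⟨hP, fun Y' hY' hw => ?_⟩
  obtain ⟨i, hiP, hiY⟩ : ∃ i ∈ P, i ∉ Y' := by
    by_contra h
    push_neg at h
    exact hY'.2 h
  refine hloc i hiP ?_
  obtain ⟨x, hx, hne⟩ := hw
  exact ⟨x, fun j hj => hx j (fun hjY => hj (Finset.mem_erase.mpr
    ⟨fun he => hiY (he ▸ hjY), hY'.1 hjY⟩)), hne⟩
end

section
/- Every weak AXp intersects every weak CXp: if X ⊆ F is a weak AXp of κ at v and Y ⊆ F is a weak CXp of κ at v, then X ∩ Y ≠ ∅. In particular, every AXp intersects every CXp. -/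
/-- Every weak AXp intersects every weak CXp. -/
theorem weakAXp_inter_weakCXp_nonempty
    {N : ℕ} {D : Fin N → Type*} [∀ i, LinearOrder (D i)] [∀ i, BoundedOrder (D i)]
    [∀ i, Nonempty (D i)]
    {K : Type*}
    (κ : (∀ i, D i) → K) (v : ∀ i, D i) (X Y : Finset (Fin N))
    (hX : WeakAXp κ v X) (hY : WeakCXp κ v Y) :
    X ∩ Y ≠ ∅ := by
  intro h
  obtain ⟨x, hx, hne⟩ := hY
  exact hne (hX x fun i hi => hx i fun hiY =>
    (Finset.eq_empty_iff_forall_notMem.mp h i (Finset.mem_inter.mpr ⟨hi, hiY⟩)))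
end

section
/- Dichotomy underlying the enumeration algorithm: for every subset Z ⊆ F of features, exactly one of the following holds: (i) there exists an AXp X of κ at v with X ⊆ Z, or (ii) there exists a CXp Y of κ at v with Y ⊆ F \ Z. -/
lemma weakAXp_mono {N : ℕ} {D : Fin N → Type*} {K : Type*}
    (κ : (∀ i, D i) → K) (v : ∀ i, D i) {X X' : Finset (Fin N)}
    (h : WeakAXp κ v X) (hs : X ⊆ X') : WeakAXp κ v X' :=
  fun x hx => h x (fun i hi => hx i (hs hi))

lemma weakCXp_mono {N : ℕ} {D : Fin N → Type*} {K : Type*}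
    (κ : (∀ i, D i) → K) (v : ∀ i, D i) {Y Y' : Finset (Fin N)}
    (h : WeakCXp κ v Y) (hs : Y ⊆ Y') : WeakCXp κ v Y' := by
  obtain ⟨x, hx, hne⟩ := h
  exact ⟨x, fun j hj => hx j (fun hj' => hj (hs hj')), hne⟩

lemma exists_AXp_subset {N : ℕ} {D : Fin N → Type*} {K : Type*}
    (κ : (∀ i, D i) → K) (v : ∀ i, D i) :
    ∀ X : Finset (Fin N), WeakAXp κ v X → ∃ X' ⊆ X, AXp κ v X' := by
  intro X
  induction X using Finset.strongInduction with
  | _ X ih =>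
    intro hX
    by_cases h : ∀ X' ⊂ X, ¬ WeakAXp κ v X'
    · exact ⟨X, le_refl _, hX, h⟩
    · push_neg at h
      obtain ⟨X', hss, hX'⟩ := h
      obtain ⟨X'', hs2, hA⟩ := ih X' hss hX'
      exact ⟨X'', hs2.trans hss.subset, hA⟩

lemma exists_CXp_subset {N : ℕ} {D : Fin N → Type*} {K : Type*}
    (κ : (∀ i, D i) → K) (v : ∀ i, D i) :
    ∀ Y : Finset (Fin N), WeakCXp κ v Y → ∃ Y' ⊆ Y, CXp κ v Y' := by
  intro Y
  induction Y using Finset.strongInduction with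
  | _ Y ih =>
    intro hY
    by_cases h : ∀ Y' ⊂ Y, ¬ WeakCXp κ v Y'
    · exact ⟨Y, le_refl _, hY, h⟩
    · push_neg at h
      obtain ⟨Y', hss, hY'⟩ := h
      obtain ⟨Y'', hs2, hC⟩ := ih Y' hss hY'
      exact ⟨Y'', hs2.trans hss.subset, hC⟩

/-- For every subset `Z` of features, exactly one of the following
holds: some AXp is contained in `Z`, or some CXp is contained in `F \ Z`. -/
theorem AXp_CXp_dichotomy
    {N : ℕ} {D : Fin N → Type*} [∀ i, LinearOrder (D i)] [∀ i, BoundedOrder (D i)]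
    [∀ i, Nonempty (D i)]
    {K : Type*}
    (κ : (∀ i, D i) → K) (v : ∀ i, D i) (Z : Finset (Fin N)) :
    Xor' (∃ X : Finset (Fin N), AXp κ v X ∧ X ⊆ Z)
         (∃ Y : Finset (Fin N), CXp κ v Y ∧ Y ⊆ Zᶜ) := by
  by_cases hZ : WeakAXp κ v Z
  · left
    constructor
    · obtain ⟨X, hs, hA⟩ := exists_AXp_subset κ v Z hZ
      exact ⟨X, hA, hs⟩
    · rintro ⟨Y, hC, hs⟩
      have hW : WeakCXp κ v Zᶜ := weakCXp_mono κ v hC.1 hs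
      obtain ⟨x, hx, hne⟩ := hW
      exact hne (hZ x (fun i hi => hx i (by simp [hi])))
  · right
    have hW : WeakCXp κ v Zᶜ := by
      rw [WeakAXp] at hZ
      push_neg at hZ
      obtain ⟨x, hx, hne⟩ := hZ
      exact ⟨x, fun j hj => hx j (by simpa using hj), hne⟩
    constructor
    · obtain ⟨Y, hs, hC⟩ := exists_CXp_subset κ v Zᶜ hW
      exact ⟨Y, hC, hs⟩
    · rintro ⟨X, hA, hs⟩
      exact hZ (weakAXp_mono κ v hA.1 hs)
end

section
/- Monotone extension of an arbitrary boolean function (key construction in the NP-completeness proof): for every function Φ : (Fin k → Bool) → Bool there exists a function g : (Fin k → Bool) → (Fin k → Bool) → Bool that is monotone in the pair of its arguments (with Bool ordered by false < true and functions ordered pointwise) and satisfies g u (fun i => ¬ u i) = Φ u for every u : Fin k → Bool. (An explicit choice is g x y = true iff there exists u with Φ u = true, u i = true implying x i = true, and u i = false implying y i = true.) -/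
/-- Every boolean function `Φ` on `Fin k → Bool` admits a monotone
extension `g` of two arguments (monotone for the componentwise order on pairs,
with `Bool` ordered by `false < true`) such that `g u (¬u) = Φ u` for all `u`. -/
theorem exists_monotone_extension (k : ℕ) (Φ : (Fin k → Bool) → Bool) :
    ∃ g : (Fin k → Bool) → (Fin k → Bool) → Bool,
      Monotone (fun p : (Fin k → Bool) × (Fin k → Bool) => g p.1 p.2) ∧
      ∀ u : Fin k → Bool, g u (fun i => !(u i)) = Φ u := by
  refine ⟨fun x y => decide (∃ u, Φ u = true ∧ ∀ i, (u i = true → x i = true) ∧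
      (u i = false → y i = true)), ?_, ?_⟩
  · intro p q hpq
    simp only [decide_eq_decide, Bool.le_iff_imp] at *
    intro h
    rw [decide_eq_true_iff] at h
    obtain ⟨u, hu, h⟩ := h
    rw [decide_eq_true_iff]
    refine ⟨u, hu, fun i => ⟨fun hi => ?_, fun hi => ?_⟩⟩
    · exact le_antisymm (Bool.le_true _) (((h i).1 hi) ▸ hpq.1 i)
    · exact le_antisymm (Bool.le_true _) (((h i).2 hi) ▸ hpq.2 i)
  · intro u
    rcases h : Φ u with _ | _
    · simp only [decide_eq_false_iff_not]
      rintro ⟨v, hv, hvi⟩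
      have : v = u := by
        funext i
        rcases hi : v i with _ | _
        · have := (hvi i).2 hi
          simp at this
          exact this.symm
        · exact ((hvi i).1 hi).symm
      rw [this, h] at hv; exact Bool.false_ne_true hv
    · rw [decide_eq_true_iff]
      exact ⟨u, h, fun i => ⟨fun hi => hi, fun hi => by simp [hi]⟩⟩
end
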